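/- Let s be a balanced standard episturmian sequence over an alphabet A such that at least 3 distinct letters occur in s, with directive sequence Δ = a·y·a·z, where a is a letter, y is a nonempty finite word whose letters are pairwise distinct and all different from a (so that a is the first repeated letter of Δ), and z is an infinite word. Then no letter occurring in y occurs in z. -/

import Mathlib

/-- The palindromic right closure `w⁽⁺⁾`: the shortest palindrome having `w` as a prefix. -/
def palClosure {A : Type*} [DecidableEq A] (w : List A) : List A :=
  w ++ (w.take (Nat.find (⟨w.length, by simp⟩ :
    ∃ i, (w.drop i).reverse = w.drop i))).reverse

/-- Iterated palindromic closure: `Pal ε = ε`, `Pal (w·x) = (Pal w · x)⁽⁺⁾`. -/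
def Pal {A : Type*} [DecidableEq A] (w : List A) : List A :=
  w.foldl (fun p x => palClosure (p ++ [x])) []

/-- `u` is a factor of the infinite word `s`. -/
def IsFactorOf {A : Type*} (u : List A) (s : ℕ → A) : Prop :=
  ∃ i : ℕ, u = (List.range u.length).map (fun j => s (i + j))

/-- `s` is balanced. -/
def IsBalanced {A : Type*} [DecidableEq A] (s : ℕ → A) : Prop :=
  ∀ u v : List A, IsFactorOf u s → IsFactorOf v s → u.length = v.length →
    ∀ a : A, u.count a ≤ v.count a + 1

/-- `u` is a prefix of the infinite word `s`. -/
def IsPrefixOf {A : Type*} (u : List A) (s : ℕ → A) : Prop :=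
  u = (List.range u.length).map s

/-- `s` is a standard episturmian sequence with directive sequence `Δ`. -/
def IsStdEpisturmian {A : Type*} [DecidableEq A] (s Δ : ℕ → A) : Prop :=
  ∀ n : ℕ, IsPrefixOf (Pal ((List.range n).map Δ)) s

/-- Concatenation of a finite word and an infinite word. -/
def wcat {A : Type*} (u : List A) (s : ℕ → A) : ℕ → A :=
  fun n => if h : n < u.length then u.get ⟨n, h⟩ else s (n - u.length)

/-- The constant infinite word `c^ω`. -/
def constW {A : Type*} (c : A) : ℕ → A := fun _ => c

/-- The purely periodic infinite word `w^ω` (`d` is a default letter, irrelevant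
when `w` is nonempty). -/
def perW {A : Type*} (w : List A) (d : A) : ℕ → A :=
  fun n => w.getD (n % w.length) d

/-- At least three distinct letters occur in `s`. -/
def ThreeLetters {A : Type*} (s : ℕ → A) : Prop :=
  ∃ a b c : A, a ≠ b ∧ a ≠ c ∧ b ≠ c ∧
    a ∈ Set.range s ∧ b ∈ Set.range s ∧ c ∈ Set.range s

section Aux

set_option linter.unusedSectionVars false

variable {A : Type*} [DecidableEq A]

lemma palClosure_spec (w : List A) :
    ∃ i, palClosure w = w ++ (w.take i).reverse ∧
      (w.drop i).reverse = w.drop i ∧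
      ∀ j, (w.drop j).reverse = w.drop j → i ≤ j := by
  have H : ∃ i, (w.drop i).reverse = w.drop i := ⟨w.length, by simp⟩
  exact ⟨Nat.find H, rfl, Nat.find_spec H, fun _ hj => Nat.find_min' H hj⟩

lemma prefix_palClosure (w : List A) : w <+: palClosure w := ⟨_, rfl⟩

lemma palClosure_palindrome (w : List A) : (palClosure w).reverse = palClosure w := by
  obtain ⟨i, he, hp, -⟩ := palClosure_spec w
  have hw : w.reverse = List.drop i w ++ (List.take i w).reverse := by
    conv_lhs => rw [← List.take_append_drop i w]
    rw [List.reverse_append, hp]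
  rw [he, List.reverse_append, List.reverse_reverse, hw, ← List.append_assoc,
    List.take_append_drop]

lemma palClosure_min {w t : List A} (hp : (w ++ t).reverse = w ++ t) :
    (palClosure w).length ≤ w.length + t.length := by
  obtain ⟨i, he, -, hmin⟩ := palClosure_spec w
  have hlen : (palClosure w).length = w.length + min i w.length := by
    rw [he]; simp
  rcases le_or_gt w.length t.length with h | h
  · omega
  · have hd : (w.drop t.length).reverse = w.drop t.length := by
      have hw : w = w.take t.length ++ w.drop t.length := (List.take_append_drop _ _).symm
      have h1 : t.reverse ++ ((w.drop t.length).reverse ++ (w.take t.length).reverse)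
          = w.take t.length ++ (w.drop t.length ++ t) := by
        have h2 := hp
        conv_rhs at h2 => rw [hw]
        rw [List.reverse_append] at h2
        conv_lhs at h2 => rw [hw, List.reverse_append]
        simp only [List.append_assoc] at h2
        exact h2
      have hlt : t.length ≤ w.length := le_of_lt h
      have e1 := List.append_inj h1 (by simp [hlt])
      exact (List.append_inj e1.2 (by simp)).1
    have := hmin _ hd
    omega

lemma palClosure_min' {w p : List A} (hp : p.reverse = p) (hw : w <+: p) :
    (palClosure w).length ≤ p.length := by
  obtain ⟨t, rfl⟩ := hw
  simpa using palClosure_min hp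

lemma Pal_nil : Pal ([] : List A) = [] := rfl

lemma Pal_append_singleton (u : List A) (x : A) :
    Pal (u ++ [x]) = palClosure (Pal u ++ [x]) := by
  simp [Pal, List.foldl_append]

lemma Pal_palindrome (u : List A) : (Pal u).reverse = Pal u := by
  induction u using List.reverseRecOn with
  | nil => rfl
  | append_singleton v x ih => rw [Pal_append_singleton]; exact palClosure_palindrome _

lemma Pal_prefix_append (u w : List A) : Pal u <+: Pal (u ++ w) := by
  induction w using List.reverseRecOn with
  | nil => simp
  | append_singleton v x ih =>
    rw [← List.append_assoc, Pal_append_singleton]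
    exact ih.trans ((List.prefix_append _ [x]).trans (prefix_palClosure _))

lemma Pal_prefix_mono {u v : List A} (h : u <+: v) : Pal u <+: Pal v := by
  obtain ⟨w, rfl⟩ := h
  exact Pal_prefix_append u w

lemma mem_palClosure {w : List A} {c : A} : c ∈ palClosure w ↔ c ∈ w := by
  obtain ⟨i, he, -, -⟩ := palClosure_spec w
  rw [he]
  constructor
  · intro h
    rcases List.mem_append.mp h with h | h
    · exact h
    · exact List.take_subset i w (List.mem_reverse.mp h)
  · exact fun h => List.mem_append.mpr (Or.inl h)

lemma mem_Pal {u : List A} {c : A} : c ∈ Pal u ↔ c ∈ u := by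
  induction u using List.reverseRecOn with
  | nil => simp [Pal_nil]
  | append_singleton v x ih =>
    rw [Pal_append_singleton, mem_palClosure]
    simp [ih]

lemma length_le_length_Pal (u : List A) : u.length ≤ (Pal u).length := by
  induction u using List.reverseRecOn with
  | nil => simp [Pal_nil]
  | append_singleton v x ih =>
    have h := (prefix_palClosure (Pal v ++ [x])).length_le
    rw [Pal_append_singleton]
    simp only [List.length_append, List.length_cons, List.length_nil] at h ⊢
    omega

lemma palindromic_prefix {u T : List A} (hT : T.reverse = T) (hpre : T <+: Pal u) :
    ∃ v, v <+: u ∧ T = Pal v := by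
  induction u using List.reverseRecOn with
  | nil =>
    refine ⟨[], List.nil_prefix, ?_⟩
    rw [Pal_nil] at hpre ⊢
    exact List.prefix_nil.mp hpre
  | append_singleton v x ih =>
    rw [Pal_append_singleton] at hpre
    rcases le_or_gt T.length (Pal v).length with h | h
    · have hPv : Pal v <+: palClosure (Pal v ++ [x]) :=
        (List.prefix_append _ [x]).trans (prefix_palClosure _)
      have hTv : T <+: Pal v := List.prefix_of_prefix_length_le hpre hPv h
      obtain ⟨w, hw, rfl⟩ := ih hTv
      exact ⟨w, hw.trans (List.prefix_append v [x]), rfl⟩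
    · have h1 : Pal v ++ [x] <+: T :=
        List.prefix_of_prefix_length_le (prefix_palClosure _) hpre (by simp; omega)
      have h2 := palClosure_min' hT h1
      have h3 : T = palClosure (Pal v ++ [x]) := hpre.eq_of_length_le h2
      exact ⟨v ++ [x], List.prefix_refl _, by rw [Pal_append_singleton, h3]⟩

lemma Pal_J1 {u : List A} {x : A} (hx : x ∉ u) :
    Pal (u ++ [x]) = (Pal u ++ [x]) ++ Pal u := by
  rw [Pal_append_singleton]
  obtain ⟨i, he, hpal, hmin⟩ := palClosure_spec (Pal u ++ [x])
  have hxP : x ∉ Pal u := fun h => hx (mem_Pal.mp h)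
  have hle : i ≤ (Pal u).length := hmin _ (by simp)
  have hi : i = (Pal u).length := by
    rcases lt_or_eq_of_le hle with hlt | h
    · exfalso
      have hd : (Pal u ++ [x]).drop i = (Pal u).drop i ++ [x] :=
        List.drop_append_of_le_length (le_of_lt hlt)
      rw [hd, List.reverse_append] at hpal
      have hne : (Pal u).drop i ≠ [] := by
        intro h0
        have := congrArg List.length h0
        simp at this; omega
      obtain ⟨d, D', hD⟩ := List.exists_cons_of_ne_nil hne
      rw [hD] at hpal
      have hxd : x = d := by
        have h1 := congrArg List.head? hpal
        simpa using h1
      have hhead : x ∈ (Pal u).drop i := by rw [hD, hxd]; exact List.mem_cons_self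
      exact hxP (List.drop_subset i (Pal u) hhead)
    · exact h
  rw [he, hi]
  have ht : (Pal u ++ [x]).take (Pal u).length = Pal u := List.take_left
  rw [ht, Pal_palindrome]

lemma drop_palindrome {l : List A} (h : l.reverse = l) (k : ℕ) :
    l.drop (l.length - k) = (l.take k).reverse := by
  rw [List.reverse_take, h]

lemma Pal_J2 {u₁ u₂ : List A} {x : A} (hx : x ∉ u₂) :
    Pal ((u₁ ++ [x] ++ u₂) ++ [x]) =
      Pal (u₁ ++ [x] ++ u₂) ++ (Pal (u₁ ++ [x] ++ u₂)).drop (Pal u₁).length := by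
  set u := u₁ ++ [x] ++ u₂ with hu
  set P := Pal u with hP
  set q := Pal u₁ with hq
  set n := q.length with hn
  have hPP : P.reverse = P := Pal_palindrome u
  have hqq : q.reverse = q := Pal_palindrome u₁
  have hqx : q ++ [x] <+: P := by
    have h1 : q ++ [x] <+: Pal (u₁ ++ [x]) := by
      rw [Pal_append_singleton]; exact prefix_palClosure _
    exact h1.trans (Pal_prefix_mono (by rw [hu]; exact (u₁ ++ [x]).prefix_append u₂))
  have hlen : n + 1 ≤ P.length := by simpa [hn] using hqx.length_le
  have htake : P.take (n + 1) = q ++ [x] := by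
    have h2 := List.prefix_iff_eq_take.mp hqx
    simp only [List.length_append, List.length_cons, List.length_nil] at h2
    exact h2.symm
  have hdropn : P.drop n = [x] ++ P.drop (n + 1) := by
    conv_lhs => rw [← List.take_append_drop (n+1) P, htake]
    rw [List.drop_append_of_le_length (by simp [hn]), hn, List.drop_left]
  obtain ⟨i, he, hpal, hmin⟩ := palClosure_spec (P ++ [x])
  have hw1 : (P ++ [x]).drop (P.length - (n+1)) = [x] ++ q ++ [x] := by
    rw [List.drop_append_of_le_length (by omega), drop_palindrome hPP, htake]
    simp [hqq]
  have hile : i ≤ P.length - (n+1) := by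
    apply hmin
    rw [hw1]
    simp [List.reverse_append, hqq]
  have hige : P.length - (n+1) ≤ i := by
    by_contra hcon
    push_neg at hcon
    have hiP : i ≤ P.length := by omega
    have hS : (P ++ [x]).drop i = P.drop i ++ [x] := List.drop_append_of_le_length hiP
    rw [hS] at hpal
    have hDlen : n + 2 ≤ (P.drop i).length := by simp; omega
    have hne : P.drop i ≠ [] := by
      intro h0; rw [h0] at hDlen; simp at hDlen
    obtain ⟨d, T, hD⟩ := List.exists_cons_of_ne_nil hne
    rw [hD] at hpal
    have hxd : x = d := by
      have h1 := congrArg List.head? hpal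
      simpa using h1
    subst hxd
    have hTT : T.reverse = T := by
      have h1 : ([x] ++ (T.reverse ++ [x])) = [x] ++ (T ++ [x]) := by
        have h2 := hpal
        simp only [List.reverse_append, List.reverse_cons, List.reverse_nil,
          List.nil_append, List.cons_append, List.append_assoc] at h2 ⊢
        exact h2
      have h3 := List.append_cancel_left h1
      exact List.append_cancel_right h3
    have hpre2 : T ++ [x] <+: P := by
      have h4 : (P.drop i).reverse <+: P := by
        have h4' := (List.drop_suffix i P).reverse
        rwa [hPP] at h4'
      rw [hD] at h4
      simpa [hTT] using h4
    obtain ⟨v, hv, hTv⟩ := palindromic_prefix hTT ((T.prefix_append [x]).trans hpre2)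
    have hTn : n + 1 ≤ T.length := by
      rw [hD] at hDlen; simp at hDlen; omega
    -- show T.length ≤ n for contradiction
    obtain ⟨v', hv'⟩ := hv
    have hv'ne : v' ≠ [] := by
      intro h0
      rw [h0, List.append_nil] at hv'
      have : T.length < P.length := by
        have := hpre2.length_le; simp at this; omega
      rw [hTv, hv', ← hP] at this
      omega
    obtain ⟨x', v'', hx'⟩ := List.exists_cons_of_ne_nil hv'ne
    have hvx'u : v ++ [x'] <+: u :=
      ⟨v'', by rw [List.append_assoc, List.singleton_append, ← hx']; exact hv'⟩
    have hnext : Pal v ++ [x'] <+: P := by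
      have h5 : Pal v ++ [x'] <+: Pal (v ++ [x']) := by
        rw [Pal_append_singleton]; exact prefix_palClosure _
      exact h5.trans (Pal_prefix_mono hvx'u)
    have hPvx : Pal v ++ [x] <+: P := by rw [← hTv]; exact hpre2
    have hxx : x' = x := by
      have h12 : Pal v ++ [x'] = Pal v ++ [x] :=
        (List.prefix_of_prefix_length_le hnext hPvx (by simp)).eq_of_length_le (by simp)
      simpa using h12
    rw [hxx] at hvx'u
    have hu₁u : u₁ ++ [x] <+: u := by rw [hu]; exact (u₁ ++ [x]).prefix_append u₂
    have hvlen : v.length ≤ u₁.length := by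
      by_contra hc
      push_neg at hc
      have h6 : u₁ ++ [x] <+: v :=
        List.prefix_of_prefix_length_le hu₁u ((v.prefix_append [x]).trans hvx'u) (by simp; omega)
      obtain ⟨w1, hw1⟩ := h6
      have h7 : (u₁ ++ [x]) ++ (w1 ++ [x]) <+: (u₁ ++ [x]) ++ u₂ := by
        rw [← List.append_assoc, hw1, ← hu]
        exact hvx'u
      have h8 := (List.prefix_append_right_inj (u₁ ++ [x])).mp h7
      exact hx (h8.subset (by simp))
    have hvu₁ : v <+: u₁ :=
      List.prefix_of_prefix_length_le ((v.prefix_append [x]).trans hvx'u)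
        ((u₁.prefix_append [x]).trans hu₁u) hvlen
    have hTle : T.length ≤ n := by
      rw [hTv]
      simpa [hn] using (Pal_prefix_mono hvu₁).length_le
    omega
  have hi : i = P.length - (n+1) := le_antisymm hile hige
  have hgoal : palClosure (P ++ [x]) = P ++ P.drop n := by
    rw [he, hi, List.take_append_of_le_length (by omega)]
    have h9 : (P.take (P.length - (n+1))).reverse = P.drop (n+1) := by
      rw [List.reverse_take, hPP]
      congr 1
      omega
    rw [h9, hdropn, List.append_assoc]
  rw [Pal_append_singleton, ← hP, hgoal]





lemma isPrefixOf_getElem {s : ℕ → A} {M : List A} (hM : IsPrefixOf M s)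
    {i : ℕ} (hi : i < M.length) : M[i] = s i := by
  have h := List.getElem_of_eq hM hi
  simpa using h

lemma factor_mid {s : ℕ → A} {M X F Y : List A}
    (hM : IsPrefixOf M s) (h : M = X ++ (F ++ Y)) : IsFactorOf F s := by
  refine ⟨X.length, ?_⟩
  apply List.ext_getElem (by simp)
  intro j hj hj'
  have hjM : X.length + j < M.length := by
    rw [h]; simp; omega
  have h2 : M[X.length + j]'hjM = s (X.length + j) := isPrefixOf_getElem hM hjM
  have h3 : M[X.length + j]'hjM = F[j]'hj := by
    have h4 := List.getElem_of_eq h hjM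
    rw [h4]
    rw [List.getElem_append_right (by omega)]
    rw [List.getElem_append_left (by omega)]
    congr 1
    omega
  simp only [List.getElem_map, List.getElem_range]
  rw [← h2, h3]

lemma range_map_wcat (u : List A) (z : ℕ → A) (k : ℕ) :
    (List.range (u.length + k)).map (wcat u z) = u ++ (List.range k).map z := by
  apply List.ext_getElem (by simp)
  intro j hj hj'
  simp only [List.getElem_map, List.getElem_range]
  by_cases hj2 : j < u.length
  · rw [List.getElem_append_left hj2]
    simp [wcat, hj2]
  · rw [List.getElem_append_right (by omega)]
    simp only [List.getElem_map, List.getElem_range]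
    simp [wcat, hj2]

lemma range_map_prefix (Δ : ℕ → A) {k K : ℕ} (h : k ≤ K) :
    (List.range k).map Δ <+: (List.range K).map Δ := by
  have h1 : (List.range k).map Δ = ((List.range K).map Δ).take k := by
    rw [← List.map_take, List.take_range, min_eq_left h]
  rw [h1]
  exact List.take_prefix _ _

lemma range_map_succ (Δ : ℕ → A) (k : ℕ) :
    (List.range (k+1)).map Δ = (List.range k).map Δ ++ [Δ k] := by
  rw [List.range_succ, List.map_append]
  rfl

lemma letter_in_Δ {s Δ : ℕ → A} (hepi : IsStdEpisturmian s Δ) {c : A}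
    (hc : c ∈ Set.range s) : ∃ k, Δ k = c := by
  obtain ⟨j, hj⟩ := hc
  have hlen : j < (Pal ((List.range (j+1)).map Δ)).length := by
    have h1 := length_le_length_Pal ((List.range (j+1)).map Δ)
    simp at h1
    omega
  have h2 : (Pal ((List.range (j+1)).map Δ))[j] = s j := isPrefixOf_getElem (hepi (j+1)) hlen
  have h3 : c ∈ Pal ((List.range (j+1)).map Δ) := by
    rw [← hj, ← h2]
    exact List.getElem_mem _
  have h4 := mem_Pal.mp h3
  rw [List.mem_map] at h4
  obtain ⟨k, -, hk⟩ := h4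
  exact ⟨k, hk⟩




end Aux

/-- If `s` is a balanced standard episturmian sequence over at least 3 letters whose
directive sequence is `Δ = a·y·a·z` with `a` the first repeated letter (`y` nonempty,
with pairwise distinct letters all different from `a`), then no letter of `y` occurs
in `z`. -/
theorem no_letter_of_y_in_z {A : Type*} [DecidableEq A] (s Δ : ℕ → A)
    (a : A) (y : List A) (z : ℕ → A)
    (hbal : IsBalanced s) (hepi : IsStdEpisturmian s Δ) (h3 : ThreeLetters s)
    (hy : y ≠ []) (hnd : y.Nodup) (hay : a ∉ y)
    (hΔ : Δ = wcat (a :: y ++ [a]) z) :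
    ∀ b ∈ y, b ∉ Set.range z := by
  intro b hb hbz
  obtain ⟨m0, hm0⟩ := hbz
  have hex : ∃ m, z m = b := ⟨m0, hm0⟩
  have hzm : z (Nat.find hex) = b := Nat.find_spec hex
  set m := Nat.find hex with hm
  have hminz : ∀ j < m, z j ≠ b := fun j hj => Nat.find_min hex hj
  obtain ⟨y₁, y₂, hy12⟩ := List.append_of_mem hb
  have hba : b ≠ a := fun h => hay (h ▸ hb)
  rw [hy12, List.nodup_append] at hnd
  have hb2 : b ∉ y₂ := by
    have h1 := hnd.2.1
    rw [List.nodup_cons] at h1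
    exact h1.1
  have hb1 : b ∉ y₁ := fun h => hnd.2.2 b h b List.mem_cons_self rfl
  have hay' := hay
  rw [hy12] at hay'
  simp only [List.mem_append, List.mem_cons] at hay'
  push_neg at hay'
  have hay₁ : a ∉ y₁ := hay'.1
  have hay₂ : a ∉ y₂ := hay'.2.2
  -- notation
  set w₀ : List A := a :: y ++ [a] with hw₀
  set t : List A := (List.range m).map z with ht
  set u₁ : List A := a :: y₁ with hu₁
  set q₁ : List A := Pal u₁ with hq₁
  set n : ℕ := q₁.length with hn
  have hqq₁ : q₁.reverse = q₁ := Pal_palindrome u₁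
  have hlu₁ : u₁.length = y₁.length + 1 := by rw [hu₁]; simp
  have hn1 : y₁.length + 1 ≤ n := by
    have h0 := length_le_length_Pal u₁
    rw [hlu₁] at h0
    exact h0
  have hbq₁ : b ∉ q₁ := by
    rw [hq₁, mem_Pal, hu₁]
    simp [hba, hb1]
  -- Δ prefixes
  have hpfx : ∀ k, (List.range (w₀.length + k)).map Δ = w₀ ++ (List.range k).map z := by
    intro k
    rw [hΔ]
    exact range_map_wcat w₀ z k
  have hPfxK : (List.range w₀.length).map Δ = w₀ := by simpa using hpfx 0
  have hpfx_eq : ∀ v w : List A, v ++ w = w₀ → (List.range v.length).map Δ = v := by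
    intro v w hvw
    have hA := range_map_prefix Δ (show v.length ≤ w₀.length by rw [← hvw]; simp)
    rw [hPfxK, ← hvw] at hA
    exact (List.prefix_of_prefix_length_le hA (v.prefix_append w) (by simp)).eq_of_length_le
      (by simp)
  have hw₀split : (u₁ ++ [b]) ++ (y₂ ++ [a]) = w₀ := by
    rw [hw₀, hu₁, hy12]
    simp
  have hPfxℓ : (List.range u₁.length).map Δ = u₁ :=
    hpfx_eq u₁ ([b] ++ (y₂ ++ [a])) (by rw [← hw₀split]; simp)
  have hΔu₁ : ∀ j (hj : j < u₁.length), Δ j = u₁[j] := by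
    intro j hj
    have h1 := List.getElem_of_eq hPfxℓ (by simpa using hj)
    simpa using h1
  -- the prefix u ++ [b] of Δ
  have hΔwm : Δ (w₀.length + m) = b := by
    rw [hΔ]
    simp only [wcat]
    rw [dif_neg (by omega)]
    simpa using hzm
  have hPfxub : (List.range (w₀.length + m + 1)).map Δ = (w₀ ++ t) ++ [b] := by
    rw [range_map_succ, hpfx m, hΔwm, ht]
  have hbt : b ∉ t := by
    rw [ht]
    intro hmem
    rw [List.mem_map] at hmem
    obtain ⟨j, hj, hjb⟩ := hmem
    exact hminz j (List.mem_range.mp hj) hjb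
  set u₂ : List A := y₂ ++ [a] ++ t with hu₂
  have hbu₂ : b ∉ u₂ := by
    intro hmem
    rw [hu₂] at hmem
    rcases List.mem_append.mp hmem with h | h
    · rcases List.mem_append.mp h with h | h
      · exact hb2 h
      · exact hba (List.mem_singleton.mp h)
    · exact hbt h
  have hudecomp : w₀ ++ t = u₁ ++ [b] ++ u₂ := by
    rw [hu₂, ← hw₀split]
    simp [List.append_assoc]
  set P : List A := Pal (u₁ ++ [b] ++ u₂) with hP
  have hPP : P.reverse = P := Pal_palindrome _
  have hq₁b : q₁ ++ [b] <+: P := by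
    have h1 : q₁ ++ [b] <+: Pal (u₁ ++ [b]) := by
      rw [Pal_append_singleton]
      exact prefix_palClosure _
    exact h1.trans (Pal_prefix_mono ((u₁ ++ [b]).prefix_append u₂))
  have hnP : n + 1 ≤ P.length := by simpa [hn] using hq₁b.length_le
  have htakeP : P.take (n+1) = q₁ ++ [b] := by
    have h2 := List.prefix_iff_eq_take.mp hq₁b
    simp only [List.length_append, List.length_cons, List.length_nil] at h2
    exact h2.symm
  have hdropP : P.drop n = [b] ++ P.drop (n+1) := by
    conv_lhs => rw [← List.take_append_drop (n+1) P, htakeP]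
    rw [List.drop_append_of_le_length (by simp [hn]), hn, List.drop_left]
  have hsufP : P.drop (P.length - (n+1)) = [b] ++ q₁ := by
    rw [drop_palindrome hPP, htakeP]
    simp [hqq₁]
  set F₁ : List A := [b] ++ q₁ ++ [b] with hF₁
  have hW₁ : Pal ((u₁ ++ [b] ++ u₂) ++ [b]) =
      P.take (P.length - (n+1)) ++ (F₁ ++ P.drop (n+1)) := by
    rw [Pal_J2 hbu₂, ← hP, hdropP]
    calc P ++ ([b] ++ P.drop (n+1))
        = (P.take (P.length - (n+1)) ++ ([b] ++ q₁)) ++ ([b] ++ P.drop (n+1)) := by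
          rw [← hsufP, List.take_append_drop]
      _ = P.take (P.length - (n+1)) ++ (F₁ ++ P.drop (n+1)) := by
          rw [hF₁]; simp [List.append_assoc]
  have hfact₁ : IsFactorOf F₁ s := by
    apply factor_mid (hepi (w₀.length + m + 1))
    rw [hPfxub, hudecomp]
    exact hW₁
  have hcount₁ : F₁.count b = 2 := by
    rw [hF₁]
    simp [List.count_append, List.count_eq_zero_of_not_mem hbq₁]
  have hlen₁ : F₁.length = n + 2 := by rw [hF₁]; simp [hn]
  -- third letter
  have hc0 : ∃ c, c ≠ a ∧ c ≠ b ∧ c ∈ Set.range s := by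
    obtain ⟨p, q, r, hpq, hpr, hqr, hp, hq, hr⟩ := h3
    by_contra hcon
    push_neg at hcon
    have h1 : ∀ c ∈ Set.range s, c = a ∨ c = b := by
      intro c hcs
      by_contra h2
      push_neg at h2
      exact hcon c h2.1 h2.2 hcs
    rcases h1 p hp with rfl | rfl <;> rcases h1 q hq with rfl | rfl <;>
      rcases h1 r hr with rfl | rfl <;> simp_all
  -- common finisher: a b-free factor of length n+2 contradicts balance
  have finish : ∀ F₂ : List A, IsFactorOf F₂ s → F₂.length = n + 2 → F₂.count b = 0 → False := by
    intro F₂ hfact₂ hlen₂ hcount₂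
    have h1 := hbal F₁ F₂ hfact₁ hfact₂ (by rw [hlen₁, hlen₂]) b
    rw [hcount₁, hcount₂] at h1
    omega
  by_cases HA : ∃ c k, c ≠ a ∧ c ≠ b ∧ (∀ j < k, Δ j ≠ c) ∧ Δ k = c ∧ u₁.length ≤ k
  · -- CASE A: some non-{a,b} letter first occurs at position ≥ |u₁|
    obtain ⟨c, k, hca, hcb, hkmin, hkc, hkl⟩ := HA
    set v' : List A := (List.range k).map Δ with hv'
    have hcv' : c ∉ v' := by
      rw [hv', List.mem_map]
      rintro ⟨j, hj, hjc⟩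
      exact hkmin j (List.mem_range.mp hj) hjc
    have hPfxk1 : (List.range (k+1)).map Δ = v' ++ [c] := by
      rw [range_map_succ, hkc, hv']
    have hu₁v' : u₁ <+: v' := by
      rw [hv', ← hPfxℓ]
      exact range_map_prefix Δ hkl
    have hq₁v : q₁ <+: Pal v' := Pal_prefix_mono hu₁v'
    have hnv : n ≤ (Pal v').length := by simpa [hn] using hq₁v.length_le
    have htakev : (Pal v').take n = q₁ := (List.prefix_iff_eq_take.mp hq₁v).symm
    have hsufv : (Pal v').drop ((Pal v').length - n) = q₁ := by
      rw [drop_palindrome (Pal_palindrome v'), htakev, hqq₁]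
    have htake1 : (Pal v').take 1 = q₁.take 1 := by
      rw [← htakev, List.take_take, min_eq_left (by omega)]
    set F₂ : List A := q₁ ++ [c] ++ q₁.take 1 with hF₂
    have hW₂ : Pal (v' ++ [c]) =
        (Pal v').take ((Pal v').length - n) ++ (F₂ ++ (Pal v').drop 1) := by
      rw [Pal_J1 hcv']
      calc (Pal v' ++ [c]) ++ Pal v'
          = ((Pal v').take ((Pal v').length - n) ++ q₁ ++ [c]) ++
              ((Pal v').take 1 ++ (Pal v').drop 1) := by
            rw [← hsufv, List.take_append_drop, List.take_append_drop]
        _ = (Pal v').take ((Pal v').length - n) ++ (F₂ ++ (Pal v').drop 1) := by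
            rw [hF₂, htake1]
            simp [List.append_assoc]
    apply finish F₂ ?_ ?_ ?_
    · apply factor_mid (hepi (k+1))
      rw [hPfxk1]
      exact hW₂
    · rw [hF₂]
      simp [hn]
      omega
    · rw [hF₂]
      apply List.count_eq_zero_of_not_mem
      intro hmem
      rcases List.mem_append.mp hmem with h | h
      · rcases List.mem_append.mp h with h | h
        · exact hbq₁ h
        · exact hcb (List.mem_singleton.mp h).symm
      · exact hbq₁ (List.take_subset 1 q₁ h)
  · -- CASE B
    push_neg at HA
    obtain ⟨c, hca, hcb, hcs⟩ := hc0
    obtain ⟨k0, hk0⟩ := letter_in_Δ hepi hcs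
    have hexc : ∃ k, Δ k = c := ⟨k0, hk0⟩
    have hkcspec : Δ (Nat.find hexc) = c := Nat.find_spec hexc
    have hkclt : Nat.find hexc < u₁.length :=
      HA c (Nat.find hexc) hca hcb (fun j hj => Nat.find_min hexc hj) hkcspec
    have hy₁ne : 1 ≤ y₁.length := by
      by_contra h0
      push_neg at h0
      have h1 : Nat.find hexc = 0 := by omega
      have h4 : u₁[0]'(by omega) = a := by
        have h5 := List.getElem_of_eq hu₁ (show (0:ℕ) < u₁.length by omega)
        simpa using h5
      have h2 : Δ 0 = a := by
        rw [hΔu₁ 0 (by omega)]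
        exact h4
      exact hca (by rw [← hkcspec, h1, h2])
    have hn2 : 2 ≤ n := by omega
    -- y₂ = []
    have hy₂ : y₂ = [] := by
      by_contra h0
      obtain ⟨c₂, y₂', hc2⟩ := List.exists_cons_of_ne_nil h0
      have hc₂y : c₂ ∈ y := by rw [hy12, hc2]; simp
      have hc₂a : c₂ ≠ a := fun h => hay (h ▸ hc₂y)
      have hc₂b : c₂ ≠ b := by
        intro h
        apply hb2
        rw [hc2, ← h]
        exact List.mem_cons_self
      have hw₀s2 : ((u₁ ++ [b]) ++ [c₂]) ++ (y₂' ++ [a]) = w₀ := by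
        rw [← hw₀split, hc2]
        simp
      have hΔl1 : Δ (u₁.length + 1) = c₂ := by
        have hlen2 : ((u₁ ++ [b]) ++ [c₂]).length = u₁.length + 2 := by simp
        have h1 := hpfx_eq ((u₁ ++ [b]) ++ [c₂]) (y₂' ++ [a]) hw₀s2
        rw [hlen2] at h1
        have h2 : (List.range (u₁.length + 2)).map Δ
            = (List.range (u₁.length + 1)).map Δ ++ [Δ (u₁.length + 1)] :=
          range_map_succ Δ (u₁.length + 1)
        rw [h2] at h1
        have h3 : ((List.range (u₁.length + 1)).map Δ).length = u₁.length + 1 := by simp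
        have h4 := List.append_inj h1 (by simp)
        simpa using h4.2
      have hexc₂ : ∃ k, Δ k = c₂ := ⟨u₁.length + 1, hΔl1⟩
      have hk₂ : Nat.find hexc₂ < u₁.length :=
        HA c₂ _ hc₂a hc₂b (fun j hj => Nat.find_min hexc₂ hj) (Nat.find_spec hexc₂)
      have h6 : u₁[Nat.find hexc₂]'hk₂ = c₂ := by
        rw [← hΔu₁ _ hk₂]
        exact Nat.find_spec hexc₂
      have h7 : c₂ ∈ u₁ := by
        rw [← h6]
        exact List.getElem_mem _
      have h8 : c₂ ∈ a :: y₁ := by rw [← hu₁]; exact h7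
      rcases List.mem_cons.mp h8 with h9 | h9
      · exact hc₂a h9
      · exact hnd.2.2 c₂ h9 c₂ (by rw [hc2]; simp) rfl
    -- now y = y₁ ++ [b]
    have hw₀B2 : (u₁ ++ [b]) ++ [a] = w₀ := by
      rw [← hw₀split, hy₂]
      simp
    have he1 : (([] : List A) ++ [a] ++ (y₁ ++ [b])) ++ [a] = (u₁ ++ [b]) ++ [a] := by
      rw [hu₁]
      simp
    have hanotin : a ∉ y₁ ++ [b] := by
      intro hmem
      rcases List.mem_append.mp hmem with h | h
      · exact hay₁ h
      · exact hba (List.mem_singleton.mp h).symm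
    have hJ2B := Pal_J2 (u₁ := ([] : List A)) (u₂ := y₁ ++ [b]) (x := a) hanotin
    have he2 : ([] : List A) ++ [a] ++ (y₁ ++ [b]) = u₁ ++ [b] := by
      rw [hu₁]
      simp
    rw [he2, Pal_nil] at hJ2B
    simp only [List.length_nil, List.drop_zero] at hJ2B
    have hbu₁ : b ∉ u₁ := by
      rw [hu₁]
      simp [hba, hb1]
    have hQ : Pal (u₁ ++ [b]) = (q₁ ++ [b]) ++ q₁ := Pal_J1 hbu₁
    have htake2 : ((q₁ ++ [b]) ++ q₁).take 2 = q₁.take 2 := by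
      rw [List.take_append_of_le_length (by simp [hn]; omega),
        List.take_append_of_le_length (by omega)]
    set F₂ : List A := q₁ ++ q₁.take 2 with hF₂
    have hW₃ : Pal ((u₁ ++ [b]) ++ [a]) =
        (q₁ ++ [b]) ++ (F₂ ++ ((q₁ ++ [b]) ++ q₁).drop 2) := by
      rw [hJ2B, hQ]
      calc ((q₁ ++ [b]) ++ q₁) ++ ((q₁ ++ [b]) ++ q₁)
          = ((q₁ ++ [b]) ++ q₁) ++
              (((q₁ ++ [b]) ++ q₁).take 2 ++ ((q₁ ++ [b]) ++ q₁).drop 2) := by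
            rw [List.take_append_drop]
        _ = (q₁ ++ [b]) ++ (F₂ ++ ((q₁ ++ [b]) ++ q₁).drop 2) := by
            rw [htake2, hF₂]
            simp [List.append_assoc]
    apply finish F₂ ?_ ?_ ?_
    · apply factor_mid (hepi w₀.length)
      rw [hPfxK, ← hw₀B2]
      exact hW₃
    · rw [hF₂]
      simp [hn]
      omega
    · rw [hF₂]
      apply List.count_eq_zero_of_not_mem
      intro hmem
      rcases List.mem_append.mp hmem with h | h
      · exact hbq₁ h
      · exact hbq₁ (List.take_subset 2 q₁ h)
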